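/- arXiv:1210.8351 — 5 statements merged into one kernel-verified Lean document; each statement's English description precedes it below -/
import Mathlib

section
/- Let n and d be integers with n ≥ 2d ≥ 2 and let G = C_n(1,2,...,d). Then the maximum cardinality of an independent set of G is α(G) = ⌊n/(d+1)⌋. -/
open MvPolynomial

/-- The circulant graph `C_n(S)` on vertex set `ZMod n`: `i` and `j` are adjacent iff
`min(|i-j|, n-|i-j|) ∈ S`. -/
def circulantGraph (n : ℕ) (S : Set ℕ) : SimpleGraph (ZMod n) :=
  SimpleGraph.fromRel (fun i j => min (i - j).val (n - (i - j).val) ∈ S)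

/-- The edge ideal `I(G)` of a graph `G` in the polynomial ring `k[x_v : v ∈ V]`. -/
noncomputable def edgeIdeal (k : Type*) [Field k] {V : Type*} (G : SimpleGraph V) :
    Ideal (MvPolynomial V k) :=
  Ideal.span {m | ∃ i j, G.Adj i j ∧ m = X i * X j}

/-- The depth of `R/I` for `R = k[x_v : v ∈ V]`: the length of the longest sequence
of elements of `⟨x_v : v ∈ V⟩` forming a regular sequence on `R/I`. -/
noncomputable def quotDepth (k : Type*) [Field k] {V : Type*}
    (I : Ideal (MvPolynomial V k)) : WithBot ℕ∞ :=
  sSup {d : WithBot ℕ∞ | ∃ rs : List (MvPolynomial V k),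
    (∀ r ∈ rs, r ∈ Ideal.span (Set.range (X : V → MvPolynomial V k))) ∧
    RingTheory.Sequence.IsRegular (MvPolynomial V k ⧸ I) rs ∧
    d = rs.length}

/-- `R/I` is Cohen-Macaulay if its Krull dimension equals its depth. -/
def IsCohenMacaulayQuot (k : Type*) [Field k] {V : Type*}
    (I : Ideal (MvPolynomial V k)) : Prop :=
  ringKrullDim (MvPolynomial V k ⧸ I) = quotDepth k I

/-- A set of vertices is independent if no two of its members are adjacent. -/
def IsIndepSet {V : Type*} (G : SimpleGraph V) (s : Set V) : Prop :=
  s.Pairwise (fun u v => ¬ G.Adj u v)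

/-!
Two vertices of `C_n(1, …, d)` are non-adjacent exactly when each lies at forward distance
greater than `d` from the other, so an independent set is a set of residues with all cyclic
gaps at least `d + 1`. The arcs `a, a + 1, …, a + d` starting at its elements are then pairwise
disjoint, giving `|s| (d + 1) ≤ n`; conversely the multiples `0, d + 1, …, (q - 1)(d + 1)` with
`q = ⌊n / (d + 1)⌋` have all gaps at least `d + 1`, the last one being `n - (q - 1)(d + 1)`.
-/

namespace ZMod

variable {n : ℕ}

theorem natCast_injOn_Iio : Set.InjOn (Nat.cast : ℕ → ZMod n) (Set.Iio n) :=
  fun a ha b hb h => by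
    simpa [val_cast_of_lt ha, val_cast_of_lt hb] using congrArg val h

variable [NeZero n]

theorem val_sub_add_val_sub_of_ne {u v : ZMod n} (h : u ≠ v) :
    (u - v).val + (v - u).val = n := by
  rw [← neg_sub u v, neg_val, if_neg (sub_ne_zero.mpr h)]
  have := (u - v).val_lt
  omega

theorem val_natCast_sub_natCast_of_le {a b : ℕ} (hba : b ≤ a) (ha : a < n) :
    ((a : ZMod n) - b).val = a - b := by
  have hb : b < n := by omega
  rw [val_sub (by rwa [val_cast_of_lt ha, val_cast_of_lt hb]), val_cast_of_lt ha,
    val_cast_of_lt hb]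

theorem val_natCast_sub_natCast_of_lt {a b : ℕ} (hab : a < b) (hb : b < n) :
    ((a : ZMod n) - b).val = n - (b - a) := by
  have hne : (a : ZMod n) ≠ b := fun h =>
    hab.ne (natCast_injOn_Iio (by omega : a < n) hb h)
  have := val_sub_add_val_sub_of_ne hne
  rw [val_natCast_sub_natCast_of_le hab.le hb] at this
  omega

theorem card_mul_le_of_pairwise_le_val_sub {k : ℕ} {s : Finset (ZMod n)}
    (hs : (s : Set (ZMod n)).Pairwise fun u v => k ≤ (v - u).val) (hk : k ≤ n) :
    s.card * k ≤ n := by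
  have collide : ∀ {a b : ZMod n} {i j : ℕ}, a ∈ s → b ∈ s → j < k →
      a + i = b + j → i ≤ j → a = b := by
    intro a b i j ha hb hj h hij
    by_contra hab
    have hdist : (a - b).val = j - i := by
      rw [show a - b = (j : ZMod n) - i by linear_combination h,
        val_natCast_sub_natCast_of_le hij (by omega)]
    have := hs hb ha (Ne.symm hab)
    omega
  have hinj :
      Set.InjOn (fun p : ZMod n × ℕ => p.1 + (p.2 : ZMod n)) ↑(s ×ˢ Finset.range k) := by
    rintro ⟨a, i⟩ hai ⟨b, j⟩ hbj h
    simp only [Finset.coe_product, Set.mem_prod, Finset.mem_coe, Finset.mem_range] at hai hbj h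
    obtain rfl : a = b := (le_total i j).elim (collide hai.1 hbj.1 hbj.2 h)
      fun hji => (collide hbj.1 hai.1 hai.2 h.symm hji).symm
    obtain rfl : i = j :=
      natCast_injOn_Iio (by omega : i < n) (by omega : j < n) (add_left_cancel h)
    rfl
  calc s.card * k = (s ×ˢ Finset.range k).card := by rw [Finset.card_product, Finset.card_range]
    _ = ((s ×ˢ Finset.range k).image fun p : ZMod n × ℕ => p.1 + (p.2 : ZMod n)).card :=
      (Finset.card_image_of_injOn hinj).symm
    _ ≤ Finset.univ.card := Finset.card_le_univ _
    _ = n := by rw [Finset.card_univ, card]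

theorem exists_finset_card_eq_pairwise_le_val_sub {k q : ℕ} (hk : 0 < k) (hqk : q * k ≤ n) :
    ∃ s : Finset (ZMod n), s.card = q ∧
      (s : Set (ZMod n)).Pairwise fun u v => k ≤ (v - u).val := by
  have hlt : ∀ {i}, i < q → i * k + k ≤ n := fun hi => by nlinarith
  refine ⟨(Finset.range q).image fun i => ((i * k : ℕ) : ZMod n), ?_, ?_⟩
  · rw [Finset.card_image_of_injOn, Finset.card_range]
    intro i hi j hj h
    simp only [Finset.coe_range, Set.mem_Iio] at hi hj
    have := hlt hi
    have := hlt hj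
    exact Nat.eq_of_mul_eq_mul_right hk
      (natCast_injOn_Iio (by omega : i * k < n) (by omega : j * k < n) h)
  · simp only [Finset.coe_image, Finset.coe_range]
    rintro _ ⟨i, hi, rfl⟩ _ ⟨j, hj, rfl⟩ hne
    have := hlt hi
    have := hlt hj
    rcases lt_trichotomy i j with hij | rfl | hji
    · rw [val_natCast_sub_natCast_of_le (by nlinarith) (by omega)]
      have : i * k + k ≤ j * k := by nlinarith
      omega
    · exact absurd rfl hne
    · rw [val_natCast_sub_natCast_of_lt (by nlinarith) (by omega)]
      have : j * k ≤ i * k := by nlinarith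
      omega

end ZMod

section Circulant

variable {n d : ℕ} [NeZero n]

theorem circulantGraph_Icc_adj_iff {u v : ZMod n} :
    (circulantGraph n (Set.Icc 1 d)).Adj u v ↔
      u ≠ v ∧ ((u - v).val ≤ d ∨ (v - u).val ≤ d) := by
  rw [circulantGraph, SimpleGraph.fromRel_adj]
  refine and_congr_right fun huv => ?_
  have hsum := ZMod.val_sub_add_val_sub_of_ne huv
  have hpos : (u - v).val ≠ 0 := by rw [ne_eq, ZMod.val_eq_zero, sub_eq_zero]; exact huv
  have hpos' : (v - u).val ≠ 0 := by rw [ne_eq, ZMod.val_eq_zero, sub_eq_zero]; exact huv.symm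
  simp only [Set.mem_Icc]
  omega

theorem isIndepSet_circulantGraph_Icc_iff {s : Set (ZMod n)} :
    IsIndepSet (circulantGraph n (Set.Icc 1 d)) s ↔
      s.Pairwise fun u v => d + 1 ≤ (v - u).val := by
  constructor
  · intro hs u hu v hv huv
    have : ¬(circulantGraph n (Set.Icc 1 d)).Adj u v := hs hu hv huv
    rw [circulantGraph_Icc_adj_iff, not_and, not_or, not_le, not_le] at this
    exact (this huv).2
  · intro hs u hu v hv huv hadj
    have := hs hu hv huv
    have := hs hv hu huv.symm
    rw [circulantGraph_Icc_adj_iff] at hadj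
    omega

end Circulant

/-- For `n ≥ 2d ≥ 2`, the independence number of `C_n(1,2,…,d)` equals
`⌊n/(d+1)⌋`. -/
theorem circulant_indepNumber (n d : ℕ) (hd : 1 ≤ d) (hn : 2 * d ≤ n) :
    IsGreatest {m : ℕ | ∃ s : Finset (ZMod n),
      IsIndepSet (circulantGraph n (Set.Icc 1 d)) ↑s ∧ s.card = m} (n / (d + 1)) := by
  have : NeZero n := ⟨by omega⟩
  refine ⟨?_, ?_⟩
  · obtain ⟨s, hcard, hs⟩ :=
      ZMod.exists_finset_card_eq_pairwise_le_val_sub d.succ_pos (Nat.div_mul_le_self n (d + 1))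
    exact ⟨s, isIndepSet_circulantGraph_Icc_iff.mpr hs, hcard⟩
  · rintro m ⟨s, hs, rfl⟩
    rw [Nat.le_div_iff_mul_le d.succ_pos]
    exact ZMod.card_mul_le_of_pairwise_le_val_sub (isIndepSet_circulantGraph_Icc_iff.mp hs)
      (by omega)
end

section
/- Let n and d be integers with n ≥ 2d ≥ 2 and let G = C_n(1,2,...,d). For every integer k with 0 ≤ k ≤ ⌊n/(d+1)⌋, the number N_k of independent sets of G with exactly k vertices satisfies (n − dk)·N_k = n·binomial(n − dk, k). -/
open MvPolynomial

/-!
Double count the pairs `(s, v)` where `s` is an independent `j`-set of `C_n(1, …, d)` and the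
vertex `v` lies on none of the arcs `x + 1, …, x + d` with `x ∈ s`. These arcs are pairwise
disjoint, so each `s` admits `n - d j` vertices `v`. For fixed `v`, reading the elements of `s`
clockwise from `v` identifies the admissible `s` with the `j`-subsets of `{0, …, n - d - 1}`
whose elements differ by more than `d`; removing the largest element gives a Pascal-type
recursion showing there are `choose (n - d j) j` of those.
-/

open Finset

def sparseSets (d m j : ℕ) : Finset (Finset ℕ) :=
  {A ∈ (range m).powersetCard j | ∀ x ∈ A, ∀ y ∈ A, x < y → x + d < y}

section SparseSets

variable {d m j : ℕ} {A : Finset ℕ}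

lemma mem_sparseSets :
    A ∈ sparseSets d m j ↔
      (∀ x ∈ A, x < m) ∧ #A = j ∧ ∀ x ∈ A, ∀ y ∈ A, x < y → x + d < y := by
  simp [sparseSets, mem_powersetCard, subset_iff, and_assoc]

lemma sparseSets_zero_right (d m : ℕ) : sparseSets d m 0 = {∅} := by
  ext A
  simp only [mem_sparseSets, card_eq_zero, mem_singleton]
  exact ⟨fun h => h.2.1, by rintro rfl; simp⟩

lemma sparseSets_zero_left (d j : ℕ) : sparseSets d 0 (j + 1) = ∅ := by
  simp [sparseSets]

lemma sparseSets_succ_succ (d m j : ℕ) :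
    sparseSets d (m + 1) (j + 1) =
      sparseSets d m (j + 1) ∪ (sparseSets d (m - d) j).image (insert m) := by
  ext A
  simp only [mem_union, mem_image, mem_sparseSets]
  constructor
  · rintro ⟨hlt, hcard, hsparse⟩
    by_cases hm : m ∈ A
    · refine .inr ⟨A.erase m, ⟨fun x hx => ?_, ?_, fun x hx y hy => ?_⟩, insert_erase hm⟩
      · have hxA := mem_of_mem_erase hx
        have := hsparse x hxA m hm (by have := hlt x hxA; have := ne_of_mem_erase hx; omega)
        omega
      · rw [card_erase_of_mem hm, hcard, Nat.add_sub_cancel]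
      · exact hsparse x (mem_of_mem_erase hx) y (mem_of_mem_erase hy)
    · refine .inl ⟨fun x hx => ?_, hcard, hsparse⟩
      have := hlt x hx
      have : x ≠ m := by rintro rfl; exact hm hx
      omega
  · rintro (⟨hlt, hcard, hsparse⟩ | ⟨B, ⟨hlt, hcard, hsparse⟩, rfl⟩)
    · exact ⟨fun x hx => by have := hlt x hx; omega, hcard, hsparse⟩
    · have hmB : m ∉ B := fun h => by have := hlt m h; omega
      refine ⟨fun x hx => ?_, by rw [card_insert_of_notMem hmB, hcard],
        fun x hx y hy hxy => ?_⟩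
      · rcases mem_insert.1 hx with rfl | hx
        · omega
        · have := hlt x hx; omega
      · rcases mem_insert.1 hx with hx | hx <;> rcases mem_insert.1 hy with hy | hy
        · omega
        · have := hlt y hy; omega
        · have := hlt x hx; omega
        · exact hsparse x hx y hy hxy

lemma choose_sub_add_choose_sub {a b k : ℕ} (hk : k ≠ 0) :
    (a - b).choose (k + 1) + (a - b).choose k = (a + 1 - b).choose (k + 1) := by
  rcases le_or_gt b a with h | h
  · rw [Nat.sub_add_comm h, Nat.choose_succ_succ', add_comm]
  · obtain ⟨k, rfl⟩ := Nat.exists_eq_succ_of_ne_zero hk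
    simp [Nat.sub_eq_zero_of_le h.le, Nat.sub_eq_zero_of_le h]

theorem card_sparseSets (d m j : ℕ) : #(sparseSets d m j) = (m + d - d * j).choose j := by
  induction m using Nat.strong_induction_on generalizing j with
  | _ m ih =>
    rcases j with _ | j
    · simp [sparseSets_zero_right]
    rcases m with _ | m
    · simp [sparseSets_zero_left, Nat.sub_eq_zero_of_le (Nat.le_mul_of_pos_right d j.succ_pos)]
    have hdisj :
        Disjoint (sparseSets d m (j + 1)) ((sparseSets d (m - d) j).image (insert m)) := by
      refine disjoint_left.2 fun A hA hA' => ?_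
      obtain ⟨B, -, rfl⟩ := mem_image.1 hA'
      have := (mem_sparseSets.1 hA).1 m (mem_insert_self m B)
      omega
    have hinj : Set.InjOn (insert m) (sparseSets d (m - d) j : Set (Finset ℕ)) :=
      fun A hA B hB hAB => by
        have hmA : m ∉ A := fun h => by have := (mem_sparseSets.1 hA).1 m h; omega
        have hmB : m ∉ B := fun h => by have := (mem_sparseSets.1 hB).1 m h; omega
        rw [← erase_insert hmA, ← erase_insert hmB, hAB]
    rw [sparseSets_succ_succ, card_union_of_disjoint hdisj, card_image_of_injOn hinj,
      ih m (by omega), ih (m - d) (by omega)]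
    rcases j with _ | j
    · simp
    · have hd : d ≤ d * (j + 1) := Nat.le_mul_of_pos_right d j.succ_pos
      rw [show d * (j + 1 + 1) = d * (j + 1) + d by ring,
        show m + d - (d * (j + 1) + d) = m - d * (j + 1) by omega,
        show m - d + d - d * (j + 1) = m - d * (j + 1) by omega,
        show m + 1 + d - (d * (j + 1) + d) = m + 1 - d * (j + 1) by omega]
      exact choose_sub_add_choose_sub j.succ_ne_zero

end SparseSets

namespace ZMod

lemma val_add_natCast_sub {n : ℕ} (v : ZMod n) {t : ℕ} (ht : t < n) :
    (v + (t : ZMod n) - v).val = t := by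
  rw [add_sub_cancel_left, val_cast_of_lt ht]

variable {n : ℕ} [NeZero n]

lemma val_sub_swap {x y : ZMod n} (h : x ≠ y) : (y - x).val = n - (x - y).val := by
  have : NeZero (x - y) := ⟨sub_ne_zero.2 h⟩
  rw [← neg_sub, val_neg_of_ne_zero]

lemma val_sub_sub_sub {x y v : ZMod n} (h : (y - v).val ≤ (x - v).val) :
    (x - y).val = (x - v).val - (y - v).val := by
  rw [← val_sub h, sub_sub_sub_cancel_right]

end ZMod

section Circulant

variable {n d j : ℕ} [NeZero n]

lemma circulantGraph_Icc_adj {x y : ZMod n} :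
    (circulantGraph n (Set.Icc 1 d)).Adj x y ↔
      x ≠ y ∧ ((x - y).val ≤ d ∨ (y - x).val ≤ d) := by
  rw [circulantGraph, SimpleGraph.fromRel_adj]
  refine and_congr_right fun hxy => ?_
  have hpos : 0 < (x - y).val := ZMod.val_pos.2 (sub_ne_zero.2 hxy)
  have hlt : (x - y).val < n := ZMod.val_lt _
  simp only [Set.mem_Icc, ZMod.val_sub_swap hxy]
  omega

lemma isIndepSet_circulantGraph_Icc_iff_s3 {s : Finset (ZMod n)} :
    IsIndepSet (circulantGraph n (Set.Icc 1 d)) s ↔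
      ∀ x ∈ s, ∀ y ∈ s, x ≠ y → d < (x - y).val := by
  simp only [IsIndepSet, Set.Pairwise, mem_coe, circulantGraph_Icc_adj, not_and, not_or, not_le]
  exact ⟨fun h x hx y hy hxy => (h hx hy hxy hxy).1,
    fun h x hx y hy hxy _ => ⟨h x hx y hy hxy, h y hy x hx hxy.symm⟩⟩

variable (n d j) in
def cyclicSparseSets : Finset (Finset (ZMod n)) :=
  {s ∈ univ.powersetCard j | ∀ x ∈ s, ∀ y ∈ s, x ≠ y → d < (x - y).val}

lemma mem_cyclicSparseSets {s : Finset (ZMod n)} :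
    s ∈ cyclicSparseSets n d j ↔
      #s = j ∧ ∀ x ∈ s, ∀ y ∈ s, x ≠ y → d < (x - y).val := by
  simp [cyclicSparseSets, mem_powersetCard]

-- From here on, `(x - v).val < n - d` says that `v` is none of `x + 1, …, x + d`.

lemma card_filter_le_val_sub (hd : d ≤ n) (x : ZMod n) : #{v | n - d ≤ (x - v).val} = d := by
  calc #{v | n - d ≤ (x - v).val}
      = #(Ico (n - d) n) := by
        refine card_nbij (fun v => (x - v).val) (fun v hv => ?_) (fun v _ w _ h => ?_)
          fun k hk => ?_
        · simp only [coe_filter, mem_univ, true_and, Set.mem_ofPred_eq] at hv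
          simpa [hv] using ZMod.val_lt (x - v)
        · exact sub_right_injective (ZMod.val_injective n h)
        · rw [coe_Ico, Set.mem_Ico] at hk
          refine ⟨x - k, ?_, ?_⟩ <;> simp [ZMod.val_cast_of_lt hk.2]
          omega
    _ = d := by simp; omega

lemma card_filter_forall_val_sub_lt (hd : d ≤ n) {s : Finset (ZMod n)}
    (hs : s ∈ cyclicSparseSets n d j) : #{v | ∀ x ∈ s, (x - v).val < n - d} = n - d * j := by
  obtain ⟨hcard, hsparse⟩ := mem_cyclicSparseSets.1 hs
  have hcompl : ({v | ∀ x ∈ s, (x - v).val < n - d} : Finset (ZMod n)) =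
      univ \ s.biUnion fun x => {v | n - d ≤ (x - v).val} := by
    ext v
    simp only [mem_filter, mem_univ, true_and, mem_sdiff, mem_biUnion, not_exists, not_and,
      not_le]
  rw [hcompl, card_univ_sdiff, card_biUnion, sum_const_nat fun x _ => card_filter_le_val_sub hd x,
    ZMod.card, hcard, mul_comm]
  intro x hx y hy hxy
  refine disjoint_left.2 fun v hvx hvy => ?_
  simp only [mem_filter, mem_univ, true_and] at hvx hvy
  have hx' := ZMod.val_lt (x - v)
  have hy' := ZMod.val_lt (y - v)
  rcases le_total (y - v).val (x - v).val with h | h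
  · have := hsparse x hx y hy hxy
    rw [ZMod.val_sub_sub_sub h] at this
    omega
  · have := hsparse y hy x hx hxy.symm
    rw [ZMod.val_sub_sub_sub h] at this
    omega

lemma lt_val_sub_and_lt_val_sub_iff {x y v : ZMod n} (hy : (y - v).val < n - d)
    (hxy : (x - v).val < (y - v).val) :
    d < (x - y).val ∧ d < (y - x).val ↔ (x - v).val + d < (y - v).val := by
  have hne : y ≠ x := by rintro rfl; exact lt_irrefl _ hxy
  rw [ZMod.val_sub_swap hne, ZMod.val_sub_sub_sub hxy.le]
  omega

lemma image_val_sub_mem_sparseSets {v : ZMod n} {s : Finset (ZMod n)}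
    (hs : s ∈ cyclicSparseSets n d j) (hfree : ∀ x ∈ s, (x - v).val < n - d) :
    s.image (fun x => (x - v).val) ∈ sparseSets d (n - d) j := by
  obtain ⟨hcard, hsparse⟩ := mem_cyclicSparseSets.1 hs
  have hinj : Function.Injective fun x : ZMod n => (x - v).val :=
    fun x y h => sub_left_injective (ZMod.val_injective n h)
  refine mem_sparseSets.2
    ⟨by simpa using hfree, by rw [card_image_of_injective _ hinj, hcard], ?_⟩
  simp only [mem_image]
  rintro _ ⟨x, hx, rfl⟩ _ ⟨y, hy, rfl⟩ hxy
  have hne : x ≠ y := by rintro rfl; exact lt_irrefl _ hxy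
  exact (lt_val_sub_and_lt_val_sub_iff (hfree y hy) hxy).1
    ⟨hsparse x hx y hy hne, hsparse y hy x hx hne.symm⟩

lemma image_add_natCast_mem_cyclicSparseSets (v : ZMod n) {A : Finset ℕ}
    (hA : A ∈ sparseSets d (n - d) j) :
    A.image (fun t : ℕ => v + (t : ZMod n)) ∈ cyclicSparseSets n d j ∧
      ∀ x ∈ A.image (fun t : ℕ => v + (t : ZMod n)), (x - v).val < n - d := by
  obtain ⟨hlt, hcard, hsparse⟩ := mem_sparseSets.1 hA
  have hval {t : ℕ} (ht : t ∈ A) : (v + (t : ZMod n) - v).val = t :=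
    ZMod.val_add_natCast_sub v ((hlt t ht).trans_le (Nat.sub_le n d))
  simp only [mem_cyclicSparseSets, mem_image, forall_exists_index, and_imp,
    forall_apply_eq_imp_iff₂]
  refine ⟨⟨?_, fun a ha b hb hab => ?_⟩, fun t ht => (hval ht).trans_lt (hlt t ht)⟩
  · rw [card_image_of_injOn, hcard]
    intro a ha b hb hab
    simpa only [hval ha, hval hb] using congrArg (fun x => (x - v).val) hab
  · rcases lt_trichotomy a b with h | rfl | h
    · refine ((lt_val_sub_and_lt_val_sub_iff (v := v) ?_ ?_).2 ?_).1 <;>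
        simp only [hval ha, hval hb, hlt b hb, h, hsparse a ha b hb h]
    · exact absurd rfl hab
    · refine ((lt_val_sub_and_lt_val_sub_iff (v := v) ?_ ?_).2 ?_).2 <;>
        simp only [hval ha, hval hb, hlt a ha, h, hsparse b hb a ha h]

lemma card_filter_cyclicSparseSets (v : ZMod n) :
    #{s ∈ cyclicSparseSets n d j | ∀ x ∈ s, (x - v).val < n - d} =
      #(sparseSets d (n - d) j) := by
  refine card_nbij' (fun s => s.image fun x => (x - v).val)
    (fun A => A.image fun t : ℕ => v + (t : ZMod n)) (fun s hs => ?_)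
    (fun A hA => mem_filter.2 (image_add_natCast_mem_cyclicSparseSets v hA))
    (fun s _ => by simp [image_image, Function.comp_def]) (fun A hA => ?_)
  · obtain ⟨hs, hfree⟩ := mem_filter.1 hs
    exact image_val_sub_mem_sparseSets hs hfree
  · obtain ⟨hlt, -, -⟩ := mem_sparseSets.1 (mem_coe.1 hA)
    refine image_image.trans <| (image_congr fun t ht => ?_).trans image_id'
    exact ZMod.val_add_natCast_sub v ((hlt t ht).trans_le (Nat.sub_le n d))

theorem card_cyclicSparseSets_mul (hd : d ≤ n) :
    #(cyclicSparseSets n d j) * (n - d * j) = n * (n - d * j).choose j := by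
  rw [card_mul_eq_card_mul (s := cyclicSparseSets n d j) (t := univ)
      (fun (s : Finset (ZMod n)) v => ∀ x ∈ s, (x - v).val < n - d)
      (fun s hs => card_filter_forall_val_sub_lt hd hs)
      (fun v _ => card_filter_cyclicSparseSets v),
    card_univ, ZMod.card, card_sparseSets, Nat.sub_add_cancel hd]

end Circulant

theorem circulant_indep_count_general (n d j : ℕ) (hn : 2 * d ≤ n) :
    (n - d * j) *
        {s : Finset (ZMod n) |
          IsIndepSet (circulantGraph n (Set.Icc 1 d)) ↑s ∧ s.card = j}.ncard =
      n * Nat.choose (n - d * j) j := by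
  rcases Nat.eq_zero_or_pos n with rfl | hpos
  · simp
  have : NeZero n := ⟨hpos.ne'⟩
  have hset : {s : Finset (ZMod n) |
      IsIndepSet (circulantGraph n (Set.Icc 1 d)) ↑s ∧ s.card = j} =
        cyclicSparseSets n d j := by
    ext s
    simp [mem_cyclicSparseSets, isIndepSet_circulantGraph_Icc_iff_s3, and_comm]
  rw [hset, Set.ncard_coe_finset, mul_comm, card_cyclicSparseSets_mul (by omega)]

/-- For `n ≥ 2d ≥ 2` and `0 ≤ j ≤ ⌊n/(d+1)⌋`, the number `N_j` of independent
sets of `C_n(1,2,…,d)` with exactly `j` vertices satisfies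
`(n - d·j) · N_j = n · choose (n - d·j) j`. -/
theorem circulant_indep_count (n d j : ℕ) (hd : 1 ≤ d) (hn : 2 * d ≤ n)
    (hj : j ≤ n / (d + 1)) :
    (n - d * j) *
        {s : Finset (ZMod n) |
          IsIndepSet (circulantGraph n (Set.Icc 1 d)) ↑s ∧ s.card = j}.ncard =
      n * Nat.choose (n - d * j) j :=
  circulant_indep_count_general n d j hn
end

section
/- Let d ≥ 1 and let n be an integer with 2d+3 ≤ n ≤ 3d+2. Then the complement graph of the circulant graph C_n(1,2,...,d) is connected. -/
/-!
The vertex `i + 1` is reached from `i` in two steps of the complement, `i → i + (d + 2) → i + 1`: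
both jumps `d + 2` and `d + 1` have circular length greater than `d` as soon as `n ≥ 2d + 3`.
-/

open MvPolynomial

theorem circulantGraph_adj_add_natCast_iff {n c : ℕ} (S : Set ℕ) (hc₀ : 0 < c) (hcn : c < n)
    (i : ZMod n) : (circulantGraph n S).Adj i (i + c) ↔ min c (n - c) ∈ S := by
  have : NeZero n := ⟨by omega⟩
  have hval : (c : ZMod n).val = c := ZMod.val_natCast_of_lt hcn
  have hne : (c : ZMod n) ≠ 0 := fun h => by simp [h] at hval; omega
  have hneg : (-(c : ZMod n)).val = n - c := by rw [ZMod.neg_val, if_neg hne, hval]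
  have hloop : i ≠ i + c := fun h => hne (by simpa using h.symm)
  have hmin : min (n - c) (n - (n - c)) = min c (n - c) := by omega
  simp only [circulantGraph, SimpleGraph.fromRel_adj, ne_eq, hloop, not_false_eq_true,
    sub_add_cancel_left, add_sub_cancel_left, hneg, hval, hmin, or_self, true_and]

theorem circulantGraph_Icc_compl_adj_add_natCast {n d c : ℕ} (hdc : d < c) (hcn : c + d < n)
    (i : ZMod n) : (circulantGraph n (Set.Icc 1 d))ᶜ.Adj i (i + c) := by
  have hc : (c : ZMod n) ≠ 0 := by
    rw [Ne, ZMod.natCast_eq_zero_iff]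
    exact fun h => absurd (Nat.le_of_dvd (by omega) h) (by omega)
  refine (SimpleGraph.compl_adj _ _ _).2 ⟨fun h => hc (by simpa using h.symm), ?_⟩
  rw [circulantGraph_adj_add_natCast_iff _ (by omega) (by omega), Set.mem_Icc]
  omega

theorem SimpleGraph.preconnected_of_reachable_add_one {n : ℕ} [NeZero n]
    (G : SimpleGraph (ZMod n)) (h : ∀ i, G.Reachable i (i + 1)) : G.Preconnected := by
  have from_zero : ∀ m : ℕ, G.Reachable 0 m := by
    intro m
    induction m with
    | zero => simp
    | succ k ih => simpa using ih.trans (h k)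
  intro u v
  simpa using (from_zero u.val).symm.trans (from_zero v.val)

theorem circulantGraph_Icc_compl_reachable_add_one {n d : ℕ} (hn : 2 * d + 3 ≤ n) (i : ZMod n) :
    (circulantGraph n (Set.Icc 1 d))ᶜ.Reachable i (i + 1) := by
  have hfar := circulantGraph_Icc_compl_adj_add_natCast (show d < d + 2 by omega)
    (show d + 2 + d < n by omega) i
  have hnear := circulantGraph_Icc_compl_adj_add_natCast (show d < d + 1 by omega)
    (show d + 1 + d < n by omega) (i + 1)
  have hmeet : i + 1 + ((d + 1 : ℕ) : ZMod n) = i + ((d + 2 : ℕ) : ZMod n) := by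
    push_cast; ring
  rw [hmeet] at hnear
  exact hfar.reachable.trans hnear.reachable.symm

theorem circulant_compl_connected_general (n d : ℕ) (h1 : 2 * d + 3 ≤ n) :
    (circulantGraph n (Set.Icc 1 d))ᶜ.Connected := by
  have : NeZero n := ⟨by omega⟩
  exact ⟨SimpleGraph.preconnected_of_reachable_add_one _
    (circulantGraph_Icc_compl_reachable_add_one h1)⟩

/-- For `d ≥ 1` and `2d+3 ≤ n ≤ 3d+2`, the complement of `C_n(1,2,…,d)`
is connected. -/
theorem circulant_compl_connected (n d : ℕ) (hd : 1 ≤ d) (h1 : 2 * d + 3 ≤ n)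
    (h2 : n ≤ 3 * d + 2) :
    (circulantGraph n (Set.Icc 1 d))ᶜ.Connected :=
  circulant_compl_connected_general n d h1
end

section
/- Let d ≥ 1 and let G = C_{4d+3}(1,2,...,d). For every vertex v of G, the induced subgraph of the complement graph Gᶜ on the set of vertices that are distinct from v and not adjacent to v in G is connected. -/
open MvPolynomial

/-!
In the complement of `C_n(1,…,d)` two vertices are adjacent iff their difference, read in
`[0, n)`, lies in `[d + 1, n - d - 1]`. For `n = 4d + 3` the link of `v` is therefore
`{v + a | d + 1 ≤ a ≤ 3d + 2}`, and every vertex of it reaches the hub `v + (d + 1)` inside the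
link: directly if `a ≥ 2d + 2`, and through `v + a + (d + 1)` otherwise.
-/

theorem ZMod.min_val_neg {n : ℕ} [NeZero n] (x : ZMod n) :
    min (-x).val (n - (-x).val) = min x.val (n - x.val) := by
  have := x.val_lt
  rw [ZMod.neg_val]
  split_ifs with hx
  · simp [hx]
  · omega

theorem circulantGraph_adj_iff {n : ℕ} [NeZero n] {S : Set ℕ} {x y : ZMod n} :
    (circulantGraph n S).Adj x y ↔ x ≠ y ∧ min (x - y).val (n - (x - y).val) ∈ S := by
  rw [circulantGraph, SimpleGraph.fromRel_adj, ← neg_sub x y, ZMod.min_val_neg, or_self]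

theorem compl_circulantGraph_Icc_adj_iff {n d : ℕ} [NeZero n] {x y : ZMod n} :
    (circulantGraph n (Set.Icc 1 d))ᶜ.Adj x y ↔
      d + 1 ≤ (x - y).val ∧ (x - y).val + d + 1 ≤ n := by
  have hlt := (x - y).val_lt
  have hne : x ≠ y ↔ (x - y).val ≠ 0 := by rw [ne_eq, ne_eq, ZMod.val_eq_zero, sub_eq_zero]
  rw [SimpleGraph.compl_adj, circulantGraph_adj_iff, hne, Set.mem_Icc]
  omega

theorem SimpleGraph.induce_connected_of_hub {V : Type*} {G : SimpleGraph V} {s : Set V} {h : V}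
    (hs : h ∈ s) (hub : ∀ u ∈ s, u ≠ h → G.Adj u h ∨ ∃ w ∈ s, G.Adj u w ∧ G.Adj w h) :
    (G.induce s).Connected := by
  have toHub : ∀ u : s, (G.induce s).Reachable u ⟨h, hs⟩ := by
    rintro ⟨u, hu⟩
    by_cases huh : u = h
    · subst huh; rfl
    rcases hub u hu huh with hadj | ⟨w, hw, huw, hwh⟩
    · exact Adj.reachable (G := G.induce s) hadj
    · exact (Adj.reachable (G := G.induce s) (u := ⟨u, hu⟩) (v := ⟨w, hw⟩) huw).trans
        (Adj.reachable (G := G.induce s) hwh)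
  exact (connected_iff _).2
    ⟨fun u w => (toHub u).trans (toHub w).symm, ⟨⟨h, hs⟩⟩⟩

theorem circulant_compl_link_connected_general (d : ℕ) (v : ZMod (4 * d + 3)) :
    ((circulantGraph (4 * d + 3) (Set.Icc 1 d))ᶜ.induce
      {w | w ≠ v ∧ ¬ (circulantGraph (4 * d + 3) (Set.Icc 1 d)).Adj v w}).Connected := by
  have : NeZero (4 * d + 3) := ⟨by omega⟩
  set G := circulantGraph (4 * d + 3) (Set.Icc 1 d)
  have hlink : {w | w ≠ v ∧ ¬ G.Adj v w} = {w | Gᶜ.Adj w v} := by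
    ext w
    rw [Set.mem_ofPred_eq, Set.mem_ofPred_eq, SimpleGraph.compl_adj, G.adj_comm]
  set c : ZMod (4 * d + 3) := ((d + 1 : ℕ) : ZMod (4 * d + 3))
  have hc : c.val = d + 1 := ZMod.val_natCast_of_lt (by omega)
  rw [hlink]
  refine SimpleGraph.induce_connected_of_hub (h := v + c) ?_ fun u hu _ => ?_
  · rw [Set.mem_ofPred_eq, compl_circulantGraph_Icc_adj_iff, add_sub_cancel_left, hc]
    omega
  rw [Set.mem_ofPred_eq, compl_circulantGraph_Icc_adj_iff] at hu
  by_cases hfar : 2 * d + 2 ≤ (u - v).val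
  · left
    rw [compl_circulantGraph_Icc_adj_iff, ← sub_sub, ZMod.val_sub (by omega), hc]
    omega
  right
  have hsum : (u - v + c).val = (u - v).val + (d + 1) := by
    rw [ZMod.val_add_of_lt (by omega), hc]
  refine ⟨u + c, ?_, ?_, ?_⟩
  · rw [Set.mem_ofPred_eq, compl_circulantGraph_Icc_adj_iff, add_sub_right_comm, hsum]
    omega
  · rw [SimpleGraph.adj_comm, compl_circulantGraph_Icc_adj_iff, add_sub_cancel_left, hc]
    omega
  · rw [compl_circulantGraph_Icc_adj_iff, add_sub_add_right_eq_sub]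
    omega

/-- For `d ≥ 1`, `G = C_{4d+3}(1,2,…,d)` and any vertex `v`, the induced
subgraph of `Gᶜ` on the vertices distinct from and non-adjacent to `v` is connected. -/
theorem circulant_compl_link_connected (d : ℕ) (hd : 1 ≤ d) (v : ZMod (4 * d + 3)) :
    ((circulantGraph (4 * d + 3) (Set.Icc 1 d))ᶜ.induce
      {w | w ≠ v ∧ ¬ (circulantGraph (4 * d + 3) (Set.Icc 1 d)).Adj v w}).Connected :=
  circulant_compl_link_connected_general d v
end

section
/- Let d ≥ 1 and let G = C_{4d+3}(1,2,...,d). For every integer j with 2d+3 ≤ j ≤ 3d+3, the set {x_1, x_{d+2}, x_j} is a maximal independent set of G, and for every integer i with d+3 ≤ i ≤ 2d+2, the set {x_1, x_i, x_{3d+3}} is a maximal independent set of G. -/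
open MvPolynomial

/-- A maximal independent set: an independent set not properly contained in any other
independent set. -/
def IsMaximalIndepSet {V : Type*} (G : SimpleGraph V) (s : Set V) : Prop :=
  IsIndepSet G s ∧ ∀ t : Set V, IsIndepSet G t → s ⊆ t → s = t


/-!
Two residues are adjacent in `C_n(1,…,d)` exactly when their distance on the `n`-cycle is at
most `d`. Three points of the cycle cut it into three arcs: the points are independent when
every arc is longer than `d`, and they dominate the graph when every arc has length at most
`2d+1`, since each vertex inside such an arc lies within distance `d` of one of its ends.
For both families of the theorem all three arcs have length between `d+1` and `2d+1`.
-/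

def circDist (n a b : ℕ) : ℕ :=
  min (Nat.dist a b) (n - Nat.dist a b)

lemma circDist_comm (n a b : ℕ) : circDist n a b = circDist n b a := by
  rw [circDist, circDist, Nat.dist_comm]

lemma min_val_natCast_sub_eq_circDist {n a b : ℕ} [NeZero n] (ha : a < n) (hb : b < n) :
    min ((a : ZMod n) - b).val (n - ((a : ZMod n) - b).val) = circDist n a b := by
  unfold circDist Nat.dist
  rcases le_or_gt b a with hba | hab
  · rw [← Nat.cast_sub hba, ZMod.val_cast_of_lt (by omega)]
    omega
  · have hsub : (a : ZMod n) - b = ((a + (n - b) : ℕ) : ZMod n) := by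
      push_cast [Nat.cast_sub hb.le, ZMod.natCast_self]
      ring
    rw [hsub, ZMod.val_cast_of_lt (by omega)]
    omega

lemma circulantGraph_adj_natCast_iff {n a b : ℕ} [NeZero n] {S : Set ℕ} (ha : a < n)
    (hb : b < n) :
    (circulantGraph n S).Adj (a : ZMod n) (b : ZMod n) ↔ a ≠ b ∧ circDist n a b ∈ S := by
  rw [circulantGraph, SimpleGraph.fromRel_adj, min_val_natCast_sub_eq_circDist ha hb,
    min_val_natCast_sub_eq_circDist hb ha, circDist_comm n b a, or_self, Ne,
    ZMod.natCast_eq_natCast_iff', Nat.mod_eq_of_lt ha, Nat.mod_eq_of_lt hb]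

lemma isMaximalIndepSet_of_forall_exists_adj {V : Type*} {G : SimpleGraph V} {s : Set V}
    (hs : IsIndepSet G s) (hdom : ∀ w ∉ s, ∃ u ∈ s, G.Adj u w) : IsMaximalIndepSet G s := by
  refine ⟨hs, fun t ht hst => hst.antisymm fun w hwt => ?_⟩
  by_contra hws
  obtain ⟨u, hus, hadj⟩ := hdom w hws
  exact ht (hst hus) hwt (fun h => hws (h ▸ hus)) hadj

lemma isMaximalIndepSet_circulantGraph_image_natCast {n : ℕ} [NeZero n] {S s : Set ℕ}
    (hlt : ∀ a ∈ s, a < n) (hsep : ∀ a ∈ s, ∀ b ∈ s, a ≠ b → circDist n a b ∉ S)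
    (hcover : ∀ m < n, m ∉ s → ∃ a ∈ s, circDist n a m ∈ S) :
    IsMaximalIndepSet (circulantGraph n S) ((↑) '' s) := by
  refine isMaximalIndepSet_of_forall_exists_adj ?_ fun w hw => ?_
  · rintro _ ⟨a, ha, rfl⟩ _ ⟨b, hb, rfl⟩ - hadj
    rw [circulantGraph_adj_natCast_iff (hlt a ha) (hlt b hb)] at hadj
    exact hsep a ha b hb hadj.1 hadj.2
  · obtain ⟨m, hm, rfl⟩ : ∃ m < n, (m : ZMod n) = w := ⟨w.val, w.val_lt, w.natCast_zmod_val⟩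
    have hms : m ∉ s := fun h => hw ⟨m, h, rfl⟩
    obtain ⟨a, ha, hS⟩ := hcover m hm hms
    refine ⟨a, ⟨a, ha, rfl⟩, (circulantGraph_adj_natCast_iff (hlt a ha) hm).2 ⟨?_, hS⟩⟩
    rintro rfl
    exact hms ha

lemma isMaximalIndepSet_circulantGraph_Icc_of_arcs {n d a b c : ℕ} (hc : c < n)
    (hab : a + d < b) (hba : b ≤ a + 2 * d + 1) (hbc : b + d < c) (hcb : c ≤ b + 2 * d + 1)
    (hca : c + d < n + a) (hac : n + a ≤ c + 2 * d + 1) :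
    IsMaximalIndepSet (circulantGraph n (Set.Icc 1 d))
      {(a : ZMod n), (b : ZMod n), (c : ZMod n)} := by
  have : NeZero n := ⟨by omega⟩
  have himage : ({(a : ZMod n), (b : ZMod n), (c : ZMod n)} : Set (ZMod n)) =
      (↑) '' ({a, b, c} : Set ℕ) := by
    simp only [Set.image_insert_eq, Set.image_singleton]
  rw [himage]
  apply isMaximalIndepSet_circulantGraph_image_natCast <;>
    simp only [Set.mem_insert_iff, Set.mem_singleton_iff, forall_eq_or_imp, forall_eq,
      exists_eq_or_imp, exists_eq_left, Set.mem_Icc, circDist, Nat.dist] <;>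
    omega

/-- For `d ≥ 1` and `G = C_{4d+3}(1,2,…,d)`: for `2d+3 ≤ j ≤ 3d+3` the set
`{x_1, x_{d+2}, x_j}` is a maximal independent set of `G`, and for `d+3 ≤ i ≤ 2d+2` the
set `{x_1, x_i, x_{3d+3}}` is a maximal independent set of `G`. -/
theorem circulant_4d3_maximal_indep_sets (d : ℕ) (hd : 1 ≤ d) :
    (∀ j : ℕ, 2 * d + 3 ≤ j → j ≤ 3 * d + 3 →
      IsMaximalIndepSet (circulantGraph (4 * d + 3) (Set.Icc 1 d))
        {((1 : ℕ) : ZMod (4 * d + 3)), ((d + 2 : ℕ) : ZMod (4 * d + 3)),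
          ((j : ℕ) : ZMod (4 * d + 3))}) ∧
    (∀ i : ℕ, d + 3 ≤ i → i ≤ 2 * d + 2 →
      IsMaximalIndepSet (circulantGraph (4 * d + 3) (Set.Icc 1 d))
        {((1 : ℕ) : ZMod (4 * d + 3)), ((i : ℕ) : ZMod (4 * d + 3)),
          ((3 * d + 3 : ℕ) : ZMod (4 * d + 3))}) :=
  ⟨fun j hj₁ hj₂ => isMaximalIndepSet_circulantGraph_Icc_of_arcs
      (by omega) (by omega) (by omega) (by omega) (by omega) (by omega) (by omega),
    fun i hi₁ hi₂ => isMaximalIndepSet_circulantGraph_Icc_of_arcs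
      (by omega) (by omega) (by omega) (by omega) (by omega) (by omega) (by omega)⟩
end
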